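/- arXiv:2005.05541 — 3 statements merged into one kernel-verified Lean document; each statement's English description precedes it below -/
import Mathlib

section
/- Given a real inner product space H, a unit vector e ∈ H, and four vectors v₊, v₋, v₊*, v₋* ∈ H of equal positive norm, such that ⟨e, v₊⟩ > 0, ⟨e, v₋⟩ < 0, and ‖v₊ - v₋‖ ≤ ‖v₊* - v₋*‖, there exists a unit vector e* ∈ H with ⟨e, v₊⟩ ≤ ⟨e*, v₊*⟩ and ⟨e, v₋⟩ ≥ ⟨e*, v₋*⟩. -/
/-!
In terms of unoriented angles, `θ₊ = ∠(e, v₊) < θ₋ = ∠(e, v₋)`, and the triangle inequality for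
angles gives `θ₋ ≤ θ₊ + ∠(v₊, v₋) ≤ θ₊ + ∠(v₊*, v₋*)`, the last step because equal norms make the
angle an increasing function of the distance. It suffices to find a unit `e*` with
`∠(e*, v₊*) ≤ θ₊` and `θ₋ ≤ ∠(e*, v₋*)`. If `θ₋ ≤ ∠(v₊*, v₋*)`, take `e*` along `v₊*`; otherwise
rotate `v₊*` in the plane of `v₊*, v₋*`, away from `v₋*`, by `θ₋ - ∠(v₊*, v₋*) ≤ θ₊`.
-/

open scoped RealInnerProductSpace

open Real InnerProductGeometry

namespace InnerProductGeometry

variable {V : Type*} [NormedAddCommGroup V] [InnerProductSpace ℝ V]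

theorem inner_le_inner_of_angle_le {x y x' y' : V} (hn : ‖x‖ * ‖y‖ = ‖x'‖ * ‖y'‖)
    (h : angle x' y' ≤ angle x y) : ⟪x, y⟫ ≤ ⟪x', y'⟫ := by
  rw [← cos_angle_mul_norm_mul_norm, ← cos_angle_mul_norm_mul_norm, hn]
  gcongr
  exact cos_le_cos_of_nonneg_of_le_pi (angle_nonneg _ _) (angle_le_pi _ _) h

theorem angle_lt_angle_of_inner_lt {x y x' y' : V} (hn : ‖x‖ * ‖y‖ = ‖x'‖ * ‖y'‖)
    (h : ⟪x', y'⟫ < ⟪x, y⟫) : angle x y < angle x' y' :=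
  lt_of_not_ge fun h' ↦ h.not_ge (inner_le_inner_of_angle_le hn h')

theorem angle_le_angle_of_inner_le {x y x' y' : V} (hn : ‖x‖ * ‖y‖ = ‖x'‖ * ‖y'‖)
    (h0 : 0 < ‖x‖ * ‖y‖) (h : ⟪x', y'⟫ ≤ ⟪x, y⟫) : angle x y ≤ angle x' y' := by
  unfold angle
  rw [← hn]
  exact arccos_le_arccos (div_le_div_of_nonneg_right h h0.le)

theorem angle_eq_of_inner_eq_mul_cos {x y : V} (hx : ‖x‖ = 1) (hy : y ≠ 0) {t : ℝ}
    (ht₀ : 0 ≤ t) (htπ : t ≤ π) (h : ⟪x, y⟫ = ‖y‖ * cos t) : angle x y = t := by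
  rw [angle, h, hx, one_mul, mul_div_cancel_left₀ _ (norm_ne_zero_iff.mpr hy), arccos_cos ht₀ htπ]

theorem exists_norm_eq_one_inner_eq_mul_cos {u w : V} (hu : u ≠ 0) (hw : w ≠ 0)
    (hφ : sin (angle u w) ≠ 0) (t : ℝ) :
    ∃ x : V, ‖x‖ = 1 ∧ ⟪x, u⟫ = ‖u‖ * cos t ∧ ⟪x, w⟫ = ‖w‖ * cos (angle u w + t) := by
  set φ := angle u w
  have hu' : ‖u‖ ≠ 0 := norm_ne_zero_iff.mpr hu
  have hw' : ‖w‖ ≠ 0 := norm_ne_zero_iff.mpr hw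
  have huw : ⟪u, w⟫ = cos φ * (‖u‖ * ‖w‖) := (cos_angle_mul_norm_mul_norm u w).symm
  -- `u / ‖u‖` rotated by `t` in the plane of `u` and `w`, away from `w`
  obtain ⟨x, hx⟩ : ∃ x : V, x = (sin φ)⁻¹ • ((sin (φ + t) / ‖u‖) • u - (sin t / ‖w‖) • w) :=
    ⟨_, rfl⟩
  have hxu : ⟪x, u⟫ = ‖u‖ * cos t := by
    simp only [hx, inner_smul_left, inner_sub_left, real_inner_self_eq_norm_sq,
      real_inner_comm u w, huw, sin_add, conj_trivial]
    field_simp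
    ring
  have hxw : ⟪x, w⟫ = ‖w‖ * cos (φ + t) := by
    simp only [hx, inner_smul_left, inner_sub_left, real_inner_self_eq_norm_sq, huw,
      sin_add, cos_add, conj_trivial]
    field_simp
    linear_combination sin t * sin_sq_add_cos_sq φ
  refine ⟨x, ?_, hxu, hxw⟩
  have hxx : ‖x‖ ^ 2 = 1 := by
    rw [← real_inner_self_eq_norm_sq]
    nth_rw 2 [hx]
    simp only [inner_smul_right, inner_sub_right, hxu, hxw, sin_add, cos_add]
    field_simp
    linear_combination sin φ * sin_sq_add_cos_sq t
  exact (pow_eq_one_iff_of_nonneg (norm_nonneg x) two_ne_zero).mp hxx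

theorem exists_norm_eq_one_angle_eq {u w : V} (hu : u ≠ 0) (hw : w ≠ 0)
    (h₀ : 0 < angle u w) (hπ : angle u w < π) {t : ℝ} (ht : 0 ≤ t) (htπ : angle u w + t ≤ π) :
    ∃ x : V, ‖x‖ = 1 ∧ angle x u = t ∧ angle x w = angle u w + t := by
  obtain ⟨x, hx, hxu, hxw⟩ :=
    exists_norm_eq_one_inner_eq_mul_cos hu hw (sin_pos_of_pos_of_lt_pi h₀ hπ).ne' t
  exact ⟨x, hx, angle_eq_of_inner_eq_mul_cos hx hu ht (by linarith) hxu,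
    angle_eq_of_inner_eq_mul_cos hx hw (by linarith) htπ hxw⟩

end InnerProductGeometry

theorem stmt_0 {H : Type*} [NormedAddCommGroup H] [InnerProductSpace ℝ H]
    (e vp vm vps vms : H) (he : ‖e‖ = 1)
    (h1 : ‖vp‖ = ‖vm‖) (h2 : ‖vm‖ = ‖vps‖) (h3 : ‖vps‖ = ‖vms‖)
    (hpos : 0 < ‖vp‖)
    (hp : 0 < ⟪e, vp⟫) (hn : ⟪e, vm⟫ < 0)
    (hd : ‖vp - vm‖ ≤ ‖vps - vms‖) :
    ∃ es : H, ‖es‖ = 1 ∧ ⟪e, vp⟫ ≤ ⟪es, vps⟫ ∧ ⟪es, vms⟫ ≤ ⟪e, vm⟫ := by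
  have hvps : vps ≠ 0 := norm_pos_iff.mp (by rwa [← h2, ← h1])
  have hvms : vms ≠ 0 := norm_pos_iff.mp (by rwa [← h3, ← h2, ← h1])
  have hpm : angle e vp < angle e vm :=
    angle_lt_angle_of_inner_lt (by rw [h1]) (hn.trans hp)
  have hφ : angle vp vm ≤ angle vps vms := by
    refine angle_le_angle_of_inner_le (by rw [← h3, ← h2, ← h1]) (by rw [← h1]; positivity) ?_
    have := pow_le_pow_left₀ (norm_nonneg _) hd 2
    rw [norm_sub_sq_real, norm_sub_sq_real, ← h3, ← h2, ← h1] at this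
    linarith
  have htri := angle_le_angle_add_angle e vp vm
  obtain ⟨es, hes, hes_p, hes_m⟩ :
      ∃ es : H, ‖es‖ = 1 ∧ angle es vps ≤ angle e vp ∧ angle e vm ≤ angle es vms := by
    rcases le_or_gt (angle e vm) (angle vps vms) with h | h
    · refine ⟨‖vps‖⁻¹ • vps, norm_smul_inv_norm hvps, ?_, ?_⟩
      · rw [angle_smul_left_of_pos _ _ (inv_pos.mpr (norm_pos_iff.mpr hvps)), angle_self hvps]
        exact angle_nonneg _ _
      · rwa [angle_smul_left_of_pos _ _ (inv_pos.mpr (norm_pos_iff.mpr hvps))]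
    · have hπ := angle_le_pi e vm
      obtain ⟨x, hx, hxp, hxm⟩ := exists_norm_eq_one_angle_eq hvps hvms
        (t := angle e vm - angle vps vms) (by linarith [angle_nonneg e vp]) (by linarith)
        (by linarith) (by linarith)
      exact ⟨x, hx, by linarith, by linarith⟩
  exact ⟨es, hes, inner_le_inner_of_angle_le (by rw [he, hes, h1, h2]) hes_p,
    inner_le_inner_of_angle_le (by rw [he, hes, ← h3, ← h2]) hes_m⟩
end

section
/- Let H be a real inner product space, e ∈ H a unit vector, and v₊, v₋ ∈ H nonzero vectors. With p = ⟨e, v₊⟩ and n = ⟨e, v₋⟩, one has cos(γ₋ - γ₊) = (pn + ‖v₊ - p·e‖·‖v₋ - n·e‖)/(‖v₊‖‖v₋‖), where γ₊, γ₋ are the angles between e and v₊, v₋ respectively; in particular cos(γ₋ - γ₊) ≥ ⟨v₊, v₋⟩/(‖v₊‖‖v₋‖). -/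
open scoped RealInnerProductSpace
open InnerProductGeometry

private lemma norm_sub_proj_sq {H : Type*} [NormedAddCommGroup H] [InnerProductSpace ℝ H]
    (e v : H) (he : ‖e‖ = 1) :
    ‖v - ⟪e, v⟫ • e‖ ^ 2 = ‖v‖ ^ 2 - ⟪e, v⟫ ^ 2 := by
  rw [norm_sub_sq_real v (⟪e, v⟫ • e), inner_smul_right, norm_smul, real_inner_comm v e]
  simp [he, mul_pow, sq_abs]
  ring

private lemma sin_angle_eq {H : Type*} [NormedAddCommGroup H] [InnerProductSpace ℝ H]
    (e v : H) (he : ‖e‖ = 1) (hv : v ≠ 0) :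
    Real.sin (angle e v) = ‖v - ⟪e, v⟫ • e‖ / ‖v‖ := by
  have hvn : (0:ℝ) < ‖v‖ := norm_pos_iff.mpr hv
  have hc : Real.cos (angle e v) = ⟪e, v⟫ / ‖v‖ := by
    rw [cos_angle, he, one_mul]
  rw [Real.sin_eq_sqrt_one_sub_cos_sq (angle_nonneg e v) (angle_le_pi e v), hc]
  have h1 : 1 - (⟪e, v⟫ / ‖v‖) ^ 2 = (‖v - ⟪e, v⟫ • e‖ / ‖v‖) ^ 2 := by
    rw [div_pow, div_pow, norm_sub_proj_sq e v he]
    field_simp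
  rw [h1, Real.sqrt_sq (by positivity)]

theorem stmt_3 {H : Type*} [NormedAddCommGroup H] [InnerProductSpace ℝ H]
    (e vp vm : H) (he : ‖e‖ = 1) (hvp : vp ≠ 0) (hvm : vm ≠ 0) :
    Real.cos (angle e vm - angle e vp) =
      (⟪e, vp⟫ * ⟪e, vm⟫ + ‖vp - ⟪e, vp⟫ • e‖ * ‖vm - ⟪e, vm⟫ • e‖) / (‖vp‖ * ‖vm‖) ∧
    ⟪vp, vm⟫ / (‖vp‖ * ‖vm‖) ≤ Real.cos (angle e vm - angle e vp) := by
  have hvpn : (0:ℝ) < ‖vp‖ := norm_pos_iff.mpr hvp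
  have hvmn : (0:ℝ) < ‖vm‖ := norm_pos_iff.mpr hvm
  have hcp : Real.cos (angle e vp) = ⟪e, vp⟫ / ‖vp‖ := by rw [cos_angle, he, one_mul]
  have hcm : Real.cos (angle e vm) = ⟪e, vm⟫ / ‖vm‖ := by rw [cos_angle, he, one_mul]
  have hsp := sin_angle_eq e vp he hvp
  have hsm := sin_angle_eq e vm he hvm
  have hmain : Real.cos (angle e vm - angle e vp) =
      (⟪e, vp⟫ * ⟪e, vm⟫ + ‖vp - ⟪e, vp⟫ • e‖ * ‖vm - ⟪e, vm⟫ • e‖) / (‖vp‖ * ‖vm‖) := by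
    rw [Real.cos_sub, hcp, hcm, hsp, hsm]
    field_simp
  refine ⟨hmain, ?_⟩
  rw [hmain]
  gcongr
  have key : ⟪vp, vm⟫ = ⟪e, vp⟫ * ⟪e, vm⟫ + ⟪vp - ⟪e, vp⟫ • e, vm - ⟪e, vm⟫ • e⟫ := by
    simp only [inner_sub_left, inner_sub_right, inner_smul_left, inner_smul_right,
      RCLike.conj_to_real, real_inner_self_eq_norm_sq]
    rw [real_inner_comm vp e, real_inner_comm vm e, he]
    ring
  rw [key]
  gcongr
  exact real_inner_le_norm _ _
end

section
/- Let H be a real inner product space, e* a unit vector, and u, w nonzero vectors with p* = ⟨e*, u⟩ > 0, n* = ⟨e*, w⟩ < 0, and suppose u - p*·e* and w - n*·e* are nonnegative scalar multiples of each other (i.e., ‖u - p*e*‖·‖w - n*e*‖ = ⟨u - p*e*, w - n*e*⟩). Then γ₋* - γ₊* = θ*, where γ₊*, γ₋* are the angles between e* and u, w respectively, and θ* is the angle between u and w. -/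
open scoped RealInnerProductSpace
open InnerProductGeometry

theorem stmt_11 {H : Type*} [NormedAddCommGroup H] [InnerProductSpace ℝ H]
    (es u w : H) (hes : ‖es‖ = 1) (hu : u ≠ 0) (hw : w ≠ 0)
    (hp : 0 < ⟪es, u⟫) (hn : ⟪es, w⟫ < 0)
    (hprop : ‖u - ⟪es, u⟫ • es‖ * ‖w - ⟪es, w⟫ • es‖
      = ⟪u - ⟪es, u⟫ • es, w - ⟪es, w⟫ • es⟫) :
    angle es w - angle es u = angle u w := by
  have hu0 : (0:ℝ) < ‖u‖ := norm_pos_iff.mpr hu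
  have hw0 : (0:ℝ) < ‖w‖ := norm_pos_iff.mpr hw
  have hee : ⟪es, es⟫ = 1 := by
    rw [real_inner_self_eq_norm_sq, hes]; norm_num
  have huu : ⟪u, u⟫ = ‖u‖ ^ 2 := real_inner_self_eq_norm_sq u
  have hww : ⟪w, w⟫ = ‖w‖ ^ 2 := real_inner_self_eq_norm_sq w
  set p := ⟪es, u⟫ with hpdef
  set n := ⟪es, w⟫ with hndef
  -- norms of orthogonal components
  have hup : ‖u - p • es‖ ^ 2 = ‖u‖ ^ 2 - p ^ 2 := by
    rw [← real_inner_self_eq_norm_sq]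
    simp only [inner_sub_left, inner_sub_right, real_inner_smul_left,
      real_inner_smul_right, hee, real_inner_comm es u, ← hpdef, huu]
    ring
  have hwp : ‖w - n • es‖ ^ 2 = ‖w‖ ^ 2 - n ^ 2 := by
    rw [← real_inner_self_eq_norm_sq]
    simp only [inner_sub_left, inner_sub_right, real_inner_smul_left,
      real_inner_smul_right, hee, real_inner_comm es w, ← hndef, hww]
    ring
  -- sines
  have hsinu : Real.sin (angle es u) * ‖u‖ = ‖u - p • es‖ := by
    have := sin_angle_mul_norm_mul_norm es u
    rw [hes, one_mul] at this
    rw [this, hee, huu, ← hpdef]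
    rw [show 1 * ‖u‖ ^ 2 - p * p = ‖u - p • es‖ ^ 2 by rw [hup]; ring]
    exact Real.sqrt_sq (norm_nonneg _)
  have hsinw : Real.sin (angle es w) * ‖w‖ = ‖w - n • es‖ := by
    have := sin_angle_mul_norm_mul_norm es w
    rw [hes, one_mul] at this
    rw [this, hee, hww, ← hndef]
    rw [show 1 * ‖w‖ ^ 2 - n * n = ‖w - n • es‖ ^ 2 by rw [hwp]; ring]
    exact Real.sqrt_sq (norm_nonneg _)
  -- cosines
  have hcosu : Real.cos (angle es u) * ‖u‖ = p := by
    have := cos_angle_mul_norm_mul_norm es u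
    rw [hes, one_mul] at this; rw [this]
  have hcosw : Real.cos (angle es w) * ‖w‖ = n := by
    have := cos_angle_mul_norm_mul_norm es w
    rw [hes, one_mul] at this; rw [this]
  -- inner product expansion
  have hinner : ⟪u, w⟫ = p * n + ‖u - p • es‖ * ‖w - n • es‖ := by
    rw [hprop]
    simp only [inner_sub_left, inner_sub_right, real_inner_smul_left,
      real_inner_smul_right, hee, real_inner_comm es u, real_inner_comm es w,
      ← hpdef, ← hndef, real_inner_comm w es]
    ring
  -- cos equality
  have hcos : Real.cos (angle es w - angle es u) = Real.cos (angle u w) := by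
    have h1 : Real.cos (angle es w - angle es u) * (‖u‖ * ‖w‖)
        = Real.cos (angle u w) * (‖u‖ * ‖w‖) := by
      rw [Real.cos_sub, cos_angle_mul_norm_mul_norm, hinner]
      have : (Real.cos (angle es w) * Real.cos (angle es u)
          + Real.sin (angle es w) * Real.sin (angle es u)) * (‖u‖ * ‖w‖)
          = (Real.cos (angle es w) * ‖w‖) * (Real.cos (angle es u) * ‖u‖)
          + (Real.sin (angle es w) * ‖w‖) * (Real.sin (angle es u) * ‖u‖) := by ring
      rw [this, hcosu, hcosw, hsinu, hsinw]; ring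
    exact mul_right_cancel₀ (by positivity) h1
  -- bounds on the angles
  have hcosu' : 0 < Real.cos (angle es u) := by
    have := hcosu; nlinarith
  have hcosw' : Real.cos (angle es w) < 0 := by
    have := hcosw; nlinarith
  have hau : angle es u < Real.pi / 2 := by
    by_contra h
    push_neg at h
    have := Real.cos_nonpos_of_pi_div_two_le_of_le h
      (by linarith [angle_le_pi es u, Real.pi_pos])
    linarith
  have haw : Real.pi / 2 < angle es w := by
    by_contra h
    push_neg at h
    have := Real.cos_nonneg_of_mem_Icc
      ⟨by linarith [angle_nonneg es w, Real.pi_pos], h⟩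
    linarith
  exact Real.injOn_cos
    ⟨by linarith, by linarith [angle_le_pi es w, angle_nonneg es u]⟩
    ⟨angle_nonneg u w, angle_le_pi u w⟩ hcos
end
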